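/- Suppose integers m > 0, nonnegative integers r_0 ≥ r_1 ≥ ... ≥ r_m, and a prime p with m ≤ p - 1, and set r_j := 0 for j > m. Then Σ_{ℓ=0}^m ((p-1)/2 - ℓ) r_ℓ = Σ_{ℓ=m+1}^{p-1} (ℓ - (p-1)/2) r_{p-1-ℓ} + Σ_{(p-1)/2 < ℓ ≤ m} (ℓ - (p-1)/2)(r_{p-1-ℓ} - r_ℓ) ≥ 0. -/

import Mathlib

/-- The key combinatorial identity/inequality in Sun's stability argument: for a prime
`p`, `m ≤ p - 1`, and nonincreasing nonnegative integers `r₀ ≥ r₁ ≥ ⋯ ≥ r_m` (with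
`r_j = 0` for `j > m`), one has
`Σ_{ℓ=0}^m ((p-1)/2 - ℓ) r_ℓ
  = Σ_{ℓ=m+1}^{p-1} (ℓ - (p-1)/2) r_{p-1-ℓ}
    + Σ_{(p-1)/2 < ℓ ≤ m} (ℓ - (p-1)/2)(r_{p-1-ℓ} - r_ℓ) ≥ 0`. -/
theorem stmt_15 (p : ℕ) (hp : p.Prime) (m : ℕ) (hm : 0 < m) (hmp : m ≤ p - 1)
    (r : ℕ → ℕ)
    (hanti : ∀ i j, i ≤ j → j ≤ m → r j ≤ r i)
    (hzero : ∀ j, m < j → r j = 0) :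
    (∑ ℓ ∈ Finset.range (m + 1), (((p : ℚ) - 1) / 2 - (ℓ : ℚ)) * (r ℓ : ℚ)
      = (∑ ℓ ∈ Finset.Icc (m + 1) (p - 1),
            ((ℓ : ℚ) - ((p : ℚ) - 1) / 2) * (r (p - 1 - ℓ) : ℚ))
        + ∑ ℓ ∈ (Finset.range (m + 1)).filter (fun ℓ : ℕ => ((p : ℚ) - 1) / 2 < (ℓ : ℚ)),
            ((ℓ : ℚ) - ((p : ℚ) - 1) / 2) * ((r (p - 1 - ℓ) : ℚ) - (r ℓ : ℚ))) ∧
    0 ≤ ∑ ℓ ∈ Finset.range (m + 1), (((p : ℚ) - 1) / 2 - (ℓ : ℚ)) * (r ℓ : ℚ) := by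
  have hp2 : 2 ≤ p := hp.two_le
  set n := p - 1 with hn
  have hmn : m ≤ n := hmp
  have hcast : ((p : ℚ) - 1) = (n : ℚ) := by
    have : p = n + 1 := by omega
    rw [this]; push_cast; ring
  simp only [hcast]
  have hpred : ∀ ℓ : ℕ, ((n : ℚ) / 2 < (ℓ : ℚ)) ↔ n < 2 * ℓ := by
    intro ℓ
    rw [div_lt_iff₀ (by norm_num : (0:ℚ) < 2),
      show ((ℓ:ℚ)*2) = ((2*ℓ:ℕ):ℚ) by push_cast; ring, Nat.cast_lt]
  -- Step 1: extend the sum to range (n+1)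
  have step1 : ∑ ℓ ∈ Finset.range (m + 1), ((n:ℚ)/2 - (ℓ:ℚ)) * (r ℓ : ℚ)
      = ∑ ℓ ∈ Finset.range (n + 1), ((n:ℚ)/2 - (ℓ:ℚ)) * (r ℓ : ℚ) := by
    apply Finset.sum_subset
    · intro x hx; simp only [Finset.mem_range] at *; omega
    · intro x hx hxm
      simp only [Finset.mem_range] at hx hxm
      rw [hzero x (by omega)]; simp
  -- Step 2: reflect
  have step2 : ∑ ℓ ∈ Finset.range (n + 1), ((n:ℚ)/2 - (ℓ:ℚ)) * (r ℓ : ℚ)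
      = ∑ ℓ ∈ Finset.range (n + 1), ((ℓ:ℚ) - (n:ℚ)/2) * (r (n - ℓ) : ℚ) := by
    rw [← Finset.sum_range_reflect (fun ℓ => ((ℓ:ℚ) - (n:ℚ)/2) * (r (n - ℓ) : ℚ)) (n+1)]
    apply Finset.sum_congr rfl
    intro j hj
    simp only [Finset.mem_range] at hj
    have hj' : j ≤ n := by omega
    have h1 : n + 1 - 1 - j = n - j := by omega
    have h2 : n - (n - j) = j := by omega
    rw [h1, h2, Nat.cast_sub hj']
    ring
  -- Step 3: split at m
  have step3 : ∑ ℓ ∈ Finset.range (n + 1), ((ℓ:ℚ) - (n:ℚ)/2) * (r (n - ℓ) : ℚ)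
      = (∑ ℓ ∈ Finset.range (m + 1), ((ℓ:ℚ) - (n:ℚ)/2) * (r (n - ℓ) : ℚ))
        + ∑ ℓ ∈ Finset.Icc (m+1) n, ((ℓ:ℚ) - (n:ℚ)/2) * (r (n - ℓ) : ℚ) := by
    rw [Finset.range_eq_Ico, Finset.range_eq_Ico, ← Finset.Ico_add_one_right_eq_Icc]
    exact (Finset.sum_Ico_consecutive (fun ℓ : ℕ => ((ℓ:ℚ) - (n:ℚ)/2) * (r (n - ℓ) : ℚ)) (m := 0) (n := m + 1) (k := n + 1) (Nat.zero_le _) (by omega)).symm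
  -- Step 4: the reflected tail over range (m+1) equals the filtered difference sum
  have step4 : ∑ ℓ ∈ Finset.range (m + 1), ((ℓ:ℚ) - (n:ℚ)/2) * (r (n - ℓ) : ℚ)
      = ∑ ℓ ∈ (Finset.range (m + 1)).filter (fun ℓ : ℕ => (n:ℚ)/2 < (ℓ:ℚ)),
          ((ℓ:ℚ) - (n:ℚ)/2) * ((r (n - ℓ) : ℚ) - (r ℓ : ℚ)) := by
    rw [← Finset.sum_filter_add_sum_filter_not (Finset.range (m+1))
      (fun ℓ : ℕ => (n:ℚ)/2 < (ℓ:ℚ)) (fun ℓ => ((ℓ:ℚ) - (n:ℚ)/2) * (r (n - ℓ) : ℚ))]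
    have hsub : ∑ ℓ ∈ (Finset.range (m + 1)).filter (fun ℓ : ℕ => (n:ℚ)/2 < (ℓ:ℚ)),
          ((ℓ:ℚ) - (n:ℚ)/2) * ((r (n - ℓ) : ℚ) - (r ℓ : ℚ))
        = (∑ ℓ ∈ (Finset.range (m + 1)).filter (fun ℓ : ℕ => (n:ℚ)/2 < (ℓ:ℚ)),
            ((ℓ:ℚ) - (n:ℚ)/2) * (r (n - ℓ) : ℚ))
          - ∑ ℓ ∈ (Finset.range (m + 1)).filter (fun ℓ : ℕ => (n:ℚ)/2 < (ℓ:ℚ)),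
            ((ℓ:ℚ) - (n:ℚ)/2) * (r ℓ : ℚ) := by
      rw [← Finset.sum_sub_distrib]
      exact Finset.sum_congr rfl fun x _ => by ring
    rw [hsub]
    have key : (∑ ℓ ∈ (Finset.range (m+1)).filter (fun ℓ : ℕ => ¬ ((n:ℚ)/2 < (ℓ:ℚ))),
          ((ℓ:ℚ) - (n:ℚ)/2) * (r (n - ℓ) : ℚ))
        + ∑ ℓ ∈ (Finset.range (m+1)).filter (fun ℓ : ℕ => (n:ℚ)/2 < (ℓ:ℚ)),
          ((ℓ:ℚ) - (n:ℚ)/2) * (r ℓ : ℚ) = 0 := by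
      have hF1 : (∑ ℓ ∈ Finset.range (m+1),
            if ℓ ≤ m ∧ 2*ℓ ≤ n then ((ℓ:ℚ) - (n:ℚ)/2) * (r (n - ℓ) : ℚ) else 0)
          = ∑ ℓ ∈ Finset.range (n+1),
              if ℓ ≤ m ∧ 2*ℓ ≤ n then ((ℓ:ℚ) - (n:ℚ)/2) * (r (n - ℓ) : ℚ) else 0 :=
        Finset.sum_subset (Finset.range_subset_range.2 (by omega)) (fun x hx hxm => by
          simp only [Finset.mem_range] at hx hxm
          exact if_neg (by omega))
      have hF : (∑ ℓ ∈ (Finset.range (m+1)).filter (fun ℓ : ℕ => ¬ ((n:ℚ)/2 < (ℓ:ℚ))),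
            ((ℓ:ℚ) - (n:ℚ)/2) * (r (n - ℓ) : ℚ))
          = ∑ ℓ ∈ Finset.range (n+1),
              if ℓ ≤ m ∧ 2*ℓ ≤ n then ((ℓ:ℚ) - (n:ℚ)/2) * (r (n - ℓ) : ℚ) else 0 := by
        rw [Finset.sum_filter, ← hF1]
        apply Finset.sum_congr rfl
        intro ℓ hℓ
        simp only [Finset.mem_range] at hℓ
        by_cases h : (n:ℚ)/2 < (ℓ:ℚ)
        · rw [if_neg (by simpa using h), if_neg (by rw [hpred] at h; omega)]
        · rw [if_pos (by simpa using h), if_pos (by rw [hpred] at h; omega)]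
      have hG1 : (∑ ℓ ∈ Finset.range (m+1),
            if ℓ ≤ m ∧ n < 2*ℓ then ((ℓ:ℚ) - (n:ℚ)/2) * (r ℓ : ℚ) else 0)
          = ∑ ℓ ∈ Finset.range (n+1),
              if ℓ ≤ m ∧ n < 2*ℓ then ((ℓ:ℚ) - (n:ℚ)/2) * (r ℓ : ℚ) else 0 :=
        Finset.sum_subset (Finset.range_subset_range.2 (by omega)) (fun x hx hxm => by
          simp only [Finset.mem_range] at hx hxm
          exact if_neg (by omega))
      have hG : (∑ ℓ ∈ (Finset.range (m+1)).filter (fun ℓ : ℕ => (n:ℚ)/2 < (ℓ:ℚ)),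
            ((ℓ:ℚ) - (n:ℚ)/2) * (r ℓ : ℚ))
          = ∑ ℓ ∈ Finset.range (n+1),
              if ℓ ≤ m ∧ n < 2*ℓ then ((ℓ:ℚ) - (n:ℚ)/2) * (r ℓ : ℚ) else 0 := by
        rw [Finset.sum_filter, ← hG1]
        apply Finset.sum_congr rfl
        intro ℓ hℓ
        simp only [Finset.mem_range] at hℓ
        by_cases h : (n:ℚ)/2 < (ℓ:ℚ)
        · rw [if_pos (by simpa using h), if_pos (by rw [hpred] at h; omega)]
        · rw [if_neg (by simpa using h), if_neg (by rw [hpred] at h; omega)]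
      rw [hF, hG,
        ← Finset.sum_range_reflect
          (fun ℓ => if ℓ ≤ m ∧ n < 2*ℓ then ((ℓ:ℚ) - (n:ℚ)/2) * (r ℓ : ℚ) else 0) (n+1),
        ← Finset.sum_add_distrib]
      apply Finset.sum_eq_zero
      intro ℓ hℓ
      simp only [Finset.mem_range] at hℓ
      have hℓn : ℓ ≤ n := by omega
      have hidx : n + 1 - 1 - ℓ = n - ℓ := by omega
      have h2 : n - (n - ℓ) = ℓ := by omega
      have hc : ((n - ℓ : ℕ):ℚ) = (n:ℚ) - (ℓ:ℚ) := by rw [Nat.cast_sub hℓn]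
      rw [hidx]
      by_cases h1 : ℓ ≤ m ∧ 2*ℓ ≤ n
      · rw [if_pos h1]
        by_cases h3 : n - ℓ ≤ m ∧ n < 2*(n-ℓ)
        · rw [if_pos h3, hc]; ring
        · rw [if_neg h3]
          rcases (by omega : 2*ℓ = n ∨ m < n - ℓ) with h4 | h4
          · have hq : ((2*ℓ:ℕ):ℚ) = ((n:ℕ):ℚ) := by rw [h4]
            push_cast at hq
            have : (ℓ:ℚ) - (n:ℚ)/2 = 0 := by linarith
            rw [this]; ring
          · rw [hzero _ h4]; simp
      · rw [if_neg h1]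
        by_cases h3 : n - ℓ ≤ m ∧ n < 2*(n-ℓ)
        · exfalso; omega
        · rw [if_neg h3]; ring
    linarith [key]
  have hid : ∑ ℓ ∈ Finset.range (m + 1), ((n:ℚ)/2 - (ℓ:ℚ)) * (r ℓ : ℚ)
      = (∑ ℓ ∈ Finset.Icc (m + 1) n, ((ℓ:ℚ) - (n:ℚ)/2) * (r (n - ℓ) : ℚ))
        + ∑ ℓ ∈ (Finset.range (m + 1)).filter (fun ℓ : ℕ => (n:ℚ)/2 < (ℓ:ℚ)),
            ((ℓ:ℚ) - (n:ℚ)/2) * ((r (n - ℓ) : ℚ) - (r ℓ : ℚ)) := by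
    rw [step1, step2, step3, step4]; ring
  refine ⟨hid, ?_⟩
  rw [hid]
  apply add_nonneg
  · apply Finset.sum_nonneg
    intro ℓ hℓ
    rw [Finset.mem_Icc] at hℓ
    by_cases h : n ≤ 2*ℓ
    · apply mul_nonneg _ (Nat.cast_nonneg _)
      have : ((n:ℕ):ℚ) ≤ ((2*ℓ:ℕ):ℚ) := Nat.cast_le.2 h
      push_cast at this
      linarith
    · rw [hzero (n - ℓ) (by omega)]; simp
  · apply Finset.sum_nonneg
    intro ℓ hℓ
    rw [Finset.mem_filter, Finset.mem_range] at hℓ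
    have h2 : n < 2*ℓ := (hpred ℓ).1 hℓ.2
    apply mul_nonneg
    · have : ((n:ℕ):ℚ) < ((2*ℓ:ℕ):ℚ) := Nat.cast_lt.2 h2
      push_cast at this
      linarith
    · rw [sub_nonneg]
      exact_mod_cast hanti (n - ℓ) ℓ (by omega) (by omega)
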